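/- arXiv:2010.10012 — 4 statements merged into one kernel-verified Lean document; each statement's English description precedes it below -/
import Mathlib

section
/- Let T : ({0,1}^k) → List (Fin k × Bool) be a non-clashing teacher for the powerset hypothesis class H = {0,1}^k (viewing hypotheses as functions Fin k → Bool): for all distinct h, h', it is not the case that h is consistent with every example in T(h') and h' is consistent with every example in T(h). Then for any h and any j ∈ Fin k, letting h' = h with coordinate j flipped, either (j, h j) appears in T(h) or (j, h' j) appears in T(h'). -/
theorem mem_of_not_forall_consistent_of_eq_off {α β : Type*} {S : List (α × β)} {f g : α → β}
    {j : α} (hg : ∀ z ∈ S, g z.1 = z.2) (hfg : ∀ i, i ≠ j → f i = g i)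
    (hf : ¬∀ z ∈ S, f z.1 = z.2) : (j, g j) ∈ S := by
  push Not at hf
  obtain ⟨⟨i, b⟩, hz, hfi⟩ := hf
  have hij : i = j := by
    by_contra hij
    exact hfi (by rw [hfg i hij, hg _ hz])
  subst hij
  rwa [hg _ hz]

/-- For a non-clashing teacher on the powerset class `{0,1}^k`, for every `h` and
coordinate `j`, either `(j, h j)` appears in `T h`, or `(j, h' j)` appears in `T h'`
where `h'` is `h` with coordinate `j` flipped. -/
theorem nonclashing_neighbor_example {k : ℕ}
    (T : (Fin k → Bool) → List (Fin k × Bool))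
    (hcons : ∀ (h : Fin k → Bool), ∀ z ∈ T h, h z.1 = z.2)
    (hnc : ∀ h h' : Fin k → Bool, h ≠ h' →
      ¬((∀ z ∈ T h', h z.1 = z.2) ∧ (∀ z ∈ T h, h' z.1 = z.2)))
    (h : Fin k → Bool) (j : Fin k) :
    (j, h j) ∈ T h ∨
      (j, (Function.update h j (!(h j))) j) ∈ T (Function.update h j (!(h j))) := by
  set h' := Function.update h j (!(h j))
  have hne : h ≠ h' := fun e => by simpa [h'] using congrFun e j
  rcases not_and_or.mp (hnc h h' hne) with hclash | hclash
  · exact Or.inr <| mem_of_not_forall_consistent_of_eq_off (hcons h') (fun i hi =>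
      (Function.update_of_ne hi _ _).symm) hclash
  · exact Or.inl <| mem_of_not_forall_consistent_of_eq_off (hcons h) (fun i hi =>
      Function.update_of_ne hi _ _) hclash
end

section
/- Any non-clashing teacher T for the powerset hypothesis class H = {0,1}^k satisfies Σ_{h ∈ H} |T(h)| ≥ k · 2^k / 2, i.e., 2 · Σ_{h ∈ H} |T(h)| ≥ k · 2^k. -/
/-!
Every edge `{h, h'}` of the Boolean cube, with `h` and `h'` differing exactly at `i`, must be
covered: `T h` or `T h'` contains an example at `i`. Otherwise every example of `T h'` avoids `i`,
so `h` is consistent with it, and symmetrically, so `h` and `h'` clash. Each of the `k · 2^k`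
pairs `(h, i)` is thus covered by one of the at most two cube vertices of its edge, and a vertex `h`
covers at most `|T h|` pairs.
-/

open Finset

namespace BoolCube

variable {α : Type*} [DecidableEq α]

def flipAt (h : α → Bool) (i : α) : α → Bool := Function.update h i (!h i)

@[simp]
lemma flipAt_flipAt (h : α → Bool) (i : α) : flipAt (flipAt h i) i = h := by
  simp [flipAt, Function.update_idem]

lemma flipAt_ne (h : α → Bool) (i : α) : flipAt h i ≠ h := fun he => by
  simpa [flipAt] using congrFun he i

def Consistent (h : α → Bool) (l : List (α × Bool)) : Prop := ∀ z ∈ l, h z.1 = z.2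

lemma Consistent.flipAt {h : α → Bool} {l : List (α × Bool)} {i : α} (hl : Consistent h l)
    (hi : i ∉ l.map Prod.fst) : Consistent (flipAt h i) l := by
  intro z hz
  have hzi : z.1 ≠ i := fun he => hi (List.mem_map.2 ⟨z, hz, he⟩)
  rw [BoolCube.flipAt, Function.update_of_ne hzi]
  exact hl z hz

lemma mem_keys_or_mem_keys_flipAt_of_nonclashing (T : (α → Bool) → List (α × Bool))
    (hcons : ∀ h, Consistent h (T h))
    (hnc : ∀ h h', h ≠ h' → ¬(Consistent h (T h') ∧ Consistent h' (T h)))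
    (h : α → Bool) (i : α) :
    i ∈ (T h).map Prod.fst ∨ i ∈ (T (flipAt h i)).map Prod.fst := by
  by_contra! ⟨hi, hi'⟩
  refine hnc h (flipAt h i) (flipAt_ne h i).symm ⟨?_, (hcons h).flipAt hi⟩
  simpa using (hcons (flipAt h i)).flipAt hi'

theorem card_mul_two_pow_le_two_mul_sum_card_of_covers_edges [Fintype α]
    (K : (α → Bool) → Finset α) (hK : ∀ h i, i ∈ K h ∨ i ∈ K (flipAt h i)) :
    Fintype.card α * 2 ^ Fintype.card α ≤ 2 * ∑ h, (K h).card := by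
  set S := (univ : Finset (α → Bool)).sigma K
  let σ : (_ : α → Bool) × α → (_ : α → Bool) × α := fun p => ⟨flipAt p.1 p.2, p.2⟩
  have hcover : (univ : Finset ((_ : α → Bool) × α)) ⊆ S ∪ S.image σ := by
    rintro ⟨h, i⟩ -
    rcases hK h i with hi | hi
    · exact mem_union_left _ (mem_sigma.2 ⟨mem_univ _, hi⟩)
    · exact mem_union_right _
        (mem_image.2 ⟨⟨flipAt h i, i⟩, mem_sigma.2 ⟨mem_univ _, hi⟩, by simp [σ]⟩)
  calc Fintype.card α * 2 ^ Fintype.card α = (univ : Finset ((_ : α → Bool) × α)).card := by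
        simp [Fintype.card_sigma, mul_comm]
    _ ≤ (S ∪ S.image σ).card := card_le_card hcover
    _ ≤ S.card + S.card := (card_union_le _ _).trans (Nat.add_le_add_left card_image_le _)
    _ = 2 * ∑ h, (K h).card := by rw [card_sigma]; ring

end BoolCube

open BoolCube in
/-- Any non-clashing teacher for the powerset class `{0,1}^k` satisfies
`2 · Σ_h |T h| ≥ k · 2^k`. -/
theorem nonclashing_total_size_lower_bound {k : ℕ}
    (T : (Fin k → Bool) → List (Fin k × Bool))
    (hcons : ∀ (h : Fin k → Bool), ∀ z ∈ T h, h z.1 = z.2)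
    (hnc : ∀ h h' : Fin k → Bool, h ≠ h' →
      ¬((∀ z ∈ T h', h z.1 = z.2) ∧ (∀ z ∈ T h, h' z.1 = z.2))) :
    2 * ∑ h : Fin k → Bool, (T h).length ≥ k * 2 ^ k := by
  have hcover := mem_keys_or_mem_keys_flipAt_of_nonclashing T hcons hnc
  have hcard (h : Fin k → Bool) : ((T h).map Prod.fst).toFinset.card ≤ (T h).length :=
    (List.toFinset_card_le _).trans (List.length_map _).le
  calc k * 2 ^ k = Fintype.card (Fin k) * 2 ^ Fintype.card (Fin k) := by rw [Fintype.card_fin]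
    _ ≤ 2 * ∑ h, ((T h).map Prod.fst).toFinset.card :=
        card_mul_two_pow_le_two_mul_sum_card_of_covers_edges _ (by simpa using hcover)
    _ ≤ 2 * ∑ h, (T h).length := Nat.mul_le_mul_left 2 (sum_le_sum fun h _ => hcard h)
end

section
/- For any non-clashing teacher T for the powerset hypothesis class H = {0,1}^k, there exists a hypothesis h ∈ H with |T(h)| ≥ ⌈k/2⌉. Consequently the non-clashing teaching dimension of {0,1}^k is at least ⌈k/2⌉. -/
/-!
If `h` and its flip `h'` at coordinate `i` both left `i` out of their teaching lists, each would
be consistent with the other's list, a clash. So among all `k * 2 ^ k` pairs `(h, i)`, those with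
`i` taught to `h` make up at least half, and the teaching lists have average length at least `k / 2`.
-/

open Finset Function

theorem Fintype.card_le_two_mul_card_filter_of_involutive {α : Type*} [Fintype α] [DecidableEq α]
    {σ : α → α} (hσ : Involutive σ) (p : α → Prop) [DecidablePred p]
    (hp : ∀ a, p a ∨ p (σ a)) : Fintype.card α ≤ 2 * #{a | p a} := by
  set s : Finset α := {a | p a}
  have hcover : univ ⊆ s ∪ image σ s := fun a _ => by
    rcases hp a with ha | ha
    · exact mem_union_left _ (by simpa [s] using ha)
    · exact mem_union_right _ (mem_image.2 ⟨σ a, by simpa [s] using ha, hσ a⟩)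
  calc Fintype.card α ≤ #(s ∪ image σ s) := card_le_card hcover
    _ ≤ #s + #(image σ s) := card_union_le _ _
    _ ≤ 2 * #s := by grind [card_image_le]

section Teacher

variable {ι β : Type*} [DecidableEq ι]

theorem forall_mem_update_apply_eq {L : List (ι × β)} {h : ι → β} {i : ι}
    (hL : ∀ z ∈ L, h z.1 = z.2) (hi : i ∉ L.map Prod.fst) (b : β) :
    ∀ z ∈ L, update h i b z.1 = z.2 := by
  intro z hz
  have hzi : z.1 ≠ i := fun he => hi (List.mem_map.2 ⟨z, hz, he⟩)
  rw [update_of_ne hzi, hL z hz]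

theorem mem_map_fst_or_mem_map_fst_update (T : (ι → β) → List (ι × β))
    (hcons : ∀ h, ∀ z ∈ T h, h z.1 = z.2)
    (hnc : ∀ h h', h ≠ h' → ¬((∀ z ∈ T h', h z.1 = z.2) ∧ (∀ z ∈ T h, h' z.1 = z.2)))
    (h : ι → β) {i : ι} {b : β} (hb : b ≠ h i) :
    i ∈ (T h).map Prod.fst ∨ i ∈ (T (update h i b)).map Prod.fst := by
  by_contra! ⟨hi, hi'⟩
  have hne : h ≠ update h i b := fun he => hb (by rw [he, update_self])
  refine hnc h (update h i b) hne ⟨?_, forall_mem_update_apply_eq (hcons h) hi b⟩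
  simpa [update_idem, update_eq_self] using
    forall_mem_update_apply_eq (hcons (update h i b)) hi' (h i)

theorem card_filter_mem_map_fst_le_length [Fintype ι] (L : List (ι × β)) :
    #{i | i ∈ L.map Prod.fst} ≤ L.length := by
  calc #{i | i ∈ L.map Prod.fst} = #(L.map Prod.fst).toFinset := by congr 1; ext; simp
    _ ≤ (L.map Prod.fst).length := List.toFinset_card_le _
    _ = L.length := List.length_map _

theorem exists_card_le_two_mul_length [Fintype ι] (T : (ι → Bool) → List (ι × Bool))
    (hcons : ∀ h, ∀ z ∈ T h, h z.1 = z.2)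
    (hnc : ∀ h h', h ≠ h' → ¬((∀ z ∈ T h', h z.1 = z.2) ∧ (∀ z ∈ T h, h' z.1 = z.2))) :
    ∃ h, Fintype.card ι ≤ 2 * (T h).length := by
  let flipAt : (ι → Bool) × ι → (ι → Bool) × ι := fun p => (update p.1 p.2 (!p.1 p.2), p.2)
  have hflip : Involutive flipAt := fun ⟨h, i⟩ => by
    simp only [flipAt, update_self, Bool.not_not, update_idem, update_eq_self]
  have hcount := Fintype.card_le_two_mul_card_filter_of_involutive hflip
    (fun p => p.2 ∈ (T p.1).map Prod.fst)
    fun p => mem_map_fst_or_mem_map_fst_update T hcons hnc p.1 (by simp)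
  have hsum : ∑ _h : ι → Bool, Fintype.card ι ≤ ∑ h, 2 * (T h).length := by
    calc ∑ _h : ι → Bool, Fintype.card ι = Fintype.card ((ι → Bool) × ι) := by
          simp [Fintype.card_prod, mul_comm]
      _ ≤ 2 * ∑ h, #{i | i ∈ (T h).map Prod.fst} := by
          rw [card_filter, Fintype.sum_prod_type] at hcount
          simpa only [card_filter] using hcount
      _ ≤ ∑ h, 2 * (T h).length := by
          rw [mul_sum]
          exact sum_le_sum fun h _ => by grind [card_filter_mem_map_fst_le_length (T h)]
  obtain ⟨h, -, hh⟩ := exists_le_of_sum_le univ_nonempty hsum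
  exact ⟨h, hh⟩

end Teacher

/-- For any non-clashing teacher for `{0,1}^k`, some hypothesis has a teaching list of
length at least `⌈k/2⌉`; hence `NCTD({0,1}^k) ≥ ⌈k/2⌉`. -/
theorem nonclashing_exists_large_teaching_set {k : ℕ}
    (T : (Fin k → Bool) → List (Fin k × Bool))
    (hcons : ∀ (h : Fin k → Bool), ∀ z ∈ T h, h z.1 = z.2)
    (hnc : ∀ h h' : Fin k → Bool, h ≠ h' →
      ¬((∀ z ∈ T h', h z.1 = z.2) ∧ (∀ z ∈ T h, h' z.1 = z.2))) :
    ∃ h : Fin k → Bool, (T h).length ≥ (k + 1) / 2 := by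
  obtain ⟨h, hh⟩ := exists_card_le_two_mul_length T hcons hnc
  rw [Fintype.card_fin] at hh
  exact ⟨h, by omega⟩
end

section
/- Let T be a non-clashing teacher for H = {0,1}^k. Define for each ordered pair (h, j) with j ∈ Fin k the indicator that (j, h j) ∈ T(h). Summing the observation that for each unordered pair {h, h ⊕ e_j} at least one of the two indicators is 1, over all k·2^{k−1} such pairs, yields Σ_h |T(h)| ≥ k·2^{k−1}, using that |T(h)| is at least the number of distinct instances j with (j, h j) ∈ T(h). -/
/-!
If `h` and `h'` differ only at `j` and `T h'` does not contain `(j, h' j)`, then every example of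
`T h'` is also consistent with `h`. Hence non-clashing forces, for every edge `{h, h ⊕ e_j}` of the
cube, one endpoint `g` with `(j, g j) ∈ T g`. An involution argument turns this into at least
`2^(k-1)` such `g` for each `j`, and double counting over the pairs `(g, j)` gives the bound,
since `j ↦ (j, g j)` is injective.
-/

open Finset

lemma card_filter_graph_mem_le {ι β : Type*} [Fintype ι] [DecidableEq ι] [DecidableEq β] (g : ι → β) (s : Finset (ι × β)) :
    #{j | (j, g j) ∈ s} ≤ #s :=
  card_le_card_of_injOn (fun j => (j, g j)) (fun _ hj => (mem_filter.mp hj).2)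
    (fun _ _ _ _ h => (Prod.mk.inj h).1)

lemma card_le_two_mul_card_of_involutive {α : Type*} [Fintype α] [DecidableEq α]
    {σ : α → α} (hσ : Function.Involutive σ) {s : Finset α} (hs : ∀ a, a ∈ s ∨ σ a ∈ s) :
    Fintype.card α ≤ 2 * #s := by
  have hcover : (univ : Finset α) ⊆ s ∪ s.image σ := fun a _ => by
    rcases hs a with ha | ha
    · exact mem_union_left _ ha
    · exact mem_union_right _ (mem_image.mpr ⟨σ a, ha, hσ a⟩)
  calc Fintype.card α ≤ #(s ∪ s.image σ) := card_le_card hcover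
    _ ≤ #s + #(s.image σ) := card_union_le _ _
    _ ≤ 2 * #s := by linarith [card_image_le (s := s) (f := σ)]

lemma forall_mem_consistent_of_eqOn_compl {ι β : Type*} {j : ι} {h h' : ι → β}
    (hagree : ∀ i, i ≠ j → h i = h' i) {S : Finset (ι × β)} (hS : ∀ z ∈ S, h' z.1 = z.2)
    (hj : (j, h' j) ∉ S) : ∀ z ∈ S, h z.1 = z.2 := by
  rintro ⟨i, b⟩ hz
  have hi : i ≠ j := by
    rintro rfl
    exact hj (hS _ hz ▸ hz)
  exact (hagree i hi).trans (hS _ hz)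

section BoolCube

variable {k : ℕ}

/-- The neighbour `h ⊕ e_j` of `h` in the cube `{0,1}^k`. -/
def flipAt (j : Fin k) (h : Fin k → Bool) : Fin k → Bool :=
  Function.update h j (!h j)

lemma flipAt_involutive (j : Fin k) : Function.Involutive (flipAt j) := fun h => by
  ext i
  rcases eq_or_ne i j with rfl | hij <;> simp [flipAt, *]

lemma flipAt_ne_self (j : Fin k) (h : Fin k → Bool) : flipAt j h ≠ h := fun he => by
  simpa [flipAt] using congrFun he j

lemma mem_or_flipAt_mem_of_nonclashing (T : (Fin k → Bool) → Finset (Fin k × Bool))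
    (hcons : ∀ h, ∀ z ∈ T h, h z.1 = z.2)
    (hnc : ∀ h h' : Fin k → Bool, h ≠ h' →
      ¬((∀ z ∈ T h', h z.1 = z.2) ∧ (∀ z ∈ T h, h' z.1 = z.2)))
    (j : Fin k) (h : Fin k → Bool) : (j, h j) ∈ T h ∨ (j, flipAt j h j) ∈ T (flipAt j h) := by
  by_contra! hnone
  have hagree : ∀ i, i ≠ j → h i = flipAt j h i := fun i hi => by simp [flipAt, hi]
  exact hnc h (flipAt j h) (flipAt_ne_self j h).symm
    ⟨forall_mem_consistent_of_eqOn_compl hagree (hcons _) hnone.2,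
      forall_mem_consistent_of_eqOn_compl (fun i hi => (hagree i hi).symm) (hcons _) hnone.1⟩

end BoolCube

/-- For a non-clashing teacher `T : {0,1}^k → Finset (Fin k × Bool)`, summing over all
`k·2^{k−1}` neighbor pairs `{h, h ⊕ e_j}` yields `Σ_h |T h| ≥ k·2^{k−1}`. -/
theorem nonclashing_finset_total_lower_bound {k : ℕ}
    (T : (Fin k → Bool) → Finset (Fin k × Bool))
    (hcons : ∀ (h : Fin k → Bool), ∀ z ∈ T h, h z.1 = z.2)
    (hnc : ∀ h h' : Fin k → Bool, h ≠ h' →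
      ¬((∀ z ∈ T h', h z.1 = z.2) ∧ (∀ z ∈ T h, h' z.1 = z.2))) :
    ∑ h : Fin k → Bool, (T h).card ≥ k * 2 ^ (k - 1) := by
  have per_coord (j : Fin k) : 2 ^ (k - 1) ≤ #{h | (j, h j) ∈ T h} := by
    have hcube := card_le_two_mul_card_of_involutive (flipAt_involutive j)
      (s := {h | (j, h j) ∈ T h}) (by simpa using mem_or_flipAt_mem_of_nonclashing T hcons hnc j)
    have hpow : 2 ^ k = 2 * 2 ^ (k - 1) := by
      rw [← pow_succ', Nat.sub_add_cancel (Fin.pos j)]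
    simp only [Fintype.card_fun, Fintype.card_bool, Fintype.card_fin, hpow] at hcube
    omega
  calc k * 2 ^ (k - 1) = ∑ _j : Fin k, 2 ^ (k - 1) := by simp
    _ ≤ ∑ j : Fin k, #{h | (j, h j) ∈ T h} := sum_le_sum fun j _ => per_coord j
    _ = ∑ h : Fin k → Bool, #{j | (j, h j) ∈ T h} :=
      (sum_card_bipartiteAbove_eq_sum_card_bipartiteBelow fun h j => (j, h j) ∈ T h).symm
    _ ≤ ∑ h : Fin k → Bool, #(T h) := sum_le_sum fun h _ => card_filter_graph_mem_le h (T h)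
end
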